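/- Let M > 0, f ≥ 0, m ≥ 0, and let D be a real with D ≥ ((√3−1)/2)·M. Let x_1 ≥ x_2 ≥ … ≥ x_n be real numbers with 0 < x_i ≤ M for all i, and let y_1, …, y_n be reals with 0 ≤ y_i ≤ x_i for all i, such that Σ_{i=1}^n (x_i − y_i) ≥ D. Let r be the least index such that x_1 + … + x_r ≥ D. Then (1+√3)·Σ_{i=1}^n ( f·(x_i − y_i) + m·(x_i − y_i)/x_i ) ≥ Σ_{i=1}^r ( f·x_i + m ). -/

import Mathlib

/-!
Write `z i = x i - y i` and `L = ∑ z i / x i`, so that the LP pays `f * ∑ z i + m * L` while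
RejectBig pays `f * ∑_{i<r} x i + m * r`. Since `∑ z i ≥ D`, it suffices to bound the rejected
weight by `(1 + √3) * D` and the count `r` by `(1 + √3) * L`. For `r = 1` both follow from
`x 0 ≤ M ≤ (1 + √3) * D`. For `r = k + 1 ≥ 2`, minimality of `r` gives `∑_{i<r} x i < 2 * D`,
and as `x` is sorted,
`L - k ≥ (∑_{i≥k} z i - ∑_{i<k} (x i - z i)) / x k = (∑ z i - ∑_{i<k} x i) / x k`,
which is nonnegative because `∑_{i<k} x i < D`.
-/

open Finset

lemma one_add_sqrt_three_mul_sqrt_three_sub_one_div_two :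
    (1 + √3) * ((√3 - 1) / 2) = 1 := by
  have h : √3 ^ 2 = 3 := Real.sq_sqrt (by norm_num)
  linear_combination h / 2

section Sorted

variable {n : ℕ} {x : ℕ → ℝ}

lemma sum_range_succ_le_two_mul_sum_range {k : ℕ} (hk : 0 < k) (hx : ∀ i < k, 0 ≤ x i)
    (hlast : x k ≤ x 0) :
    ∑ i ∈ range (k + 1), x i ≤ 2 * ∑ i ∈ range k, x i := by
  have hfirst : x 0 ≤ ∑ i ∈ range k, x i :=
    single_le_sum (fun i hi => hx i (mem_range.1 hi)) (mem_range.2 hk)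
  rw [sum_range_succ]
  linarith

lemma natCast_le_sum_div_of_sum_le {k : ℕ} {z : ℕ → ℝ} (hkn : k < n)
    (hpos : ∀ i < n, 0 < x i) (hsorted : ∀ i j, i ≤ j → j < n → x j ≤ x i)
    (hz0 : ∀ i < n, 0 ≤ z i) (hzx : ∀ i < n, z i ≤ x i)
    (hsum : ∑ i ∈ range k, x i ≤ ∑ i ∈ range n, z i) :
    (k : ℝ) ≤ ∑ i ∈ range n, z i / x i := by
  have hxk : 0 < x k := hpos k hkn
  have hhead : ∑ i ∈ range k, (1 - (x i - z i) / x k) ≤ ∑ i ∈ range k, z i / x i := by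
    refine sum_le_sum fun i hi => ?_
    have hin : i < n := (mem_range.1 hi).trans hkn
    have hxi : 0 < x i := hpos i hin
    calc 1 - (x i - z i) / x k ≤ 1 - (x i - z i) / x i :=
          sub_le_sub_left (div_le_div_of_nonneg_left (sub_nonneg.2 (hzx i hin)) hxk
            (hsorted i k (mem_range.1 hi).le hkn)) 1
      _ = z i / x i := by field_simp; ring
  have htail : ∑ i ∈ Ico k n, z i / x k ≤ ∑ i ∈ Ico k n, z i / x i := by
    refine sum_le_sum fun i hi => ?_
    obtain ⟨hki, hin⟩ := mem_Ico.1 hi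
    exact div_le_div_of_nonneg_left (hz0 i hin) (hpos i hin) (hsorted k i hki hin)
  have hmass : 0 ≤ ∑ i ∈ Ico k n, z i - ∑ i ∈ range k, (x i - z i) := by
    rw [sum_sub_distrib, ← sum_range_add_sum_Ico z hkn.le] at *
    linarith
  calc (k : ℝ) ≤ k + (∑ i ∈ Ico k n, z i - ∑ i ∈ range k, (x i - z i)) / x k := by
        linarith [div_nonneg hmass hxk.le]
    _ = ∑ i ∈ range k, (1 - (x i - z i) / x k) + ∑ i ∈ Ico k n, z i / x k := by
        simp only [sum_sub_distrib, sum_const, card_range, nsmul_eq_mul, mul_one, ← sum_div]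
        ring
    _ ≤ ∑ i ∈ range k, z i / x i + ∑ i ∈ Ico k n, z i / x i := add_le_add hhead htail
    _ = ∑ i ∈ range n, z i / x i := sum_range_add_sum_Ico _ hkn.le

lemma sum_range_le_one_add_sqrt_three_mul {M D : ℝ} {r : ℕ} (hM : 0 ≤ M)
    (hD : ((√3 - 1) / 2) * M ≤ D) (hx : ∀ i < n, 0 ≤ x i) (hle : ∀ i < n, x i ≤ M)
    (hsorted : ∀ i j, i ≤ j → j < n → x j ≤ x i) (hrn : r ≤ n)
    (hrmin : ∀ s < r, ∑ i ∈ range s, x i < D) :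
    ∑ i ∈ range r, x i ≤ (1 + √3) * D := by
  have hsqrt : 1 ≤ √3 := Real.one_le_sqrt.2 (by norm_num)
  have hD0 : 0 ≤ D := (mul_nonneg (by linarith) hM).trans hD
  match r, hrn, hrmin with
  | 0, _, _ => simpa using mul_nonneg (by positivity) hD0
  | 1, hrn, _ =>
    calc ∑ i ∈ range 1, x i = x 0 := sum_range_one x
      _ ≤ M := hle 0 hrn
      _ = (1 + √3) * ((√3 - 1) / 2 * M) := by
        rw [← mul_assoc, one_add_sqrt_three_mul_sqrt_three_sub_one_div_two, one_mul]
      _ ≤ (1 + √3) * D := by gcongr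
  | k + 2, hrn, hrmin =>
    calc ∑ i ∈ range (k + 2), x i ≤ 2 * ∑ i ∈ range (k + 1), x i :=
          sum_range_succ_le_two_mul_sum_range k.succ_pos (fun i hi => hx i (by omega))
            (hsorted 0 (k + 1) (k + 1).zero_le (by omega))
      _ ≤ 2 * D := by linarith [hrmin (k + 1) (by omega)]
      _ ≤ (1 + √3) * D := by gcongr; linarith

lemma natCast_le_one_add_sqrt_three_mul_sum_div {M D : ℝ} {r : ℕ} {z : ℕ → ℝ} (hM : 0 < M)
    (hD : ((√3 - 1) / 2) * M ≤ D) (hpos : ∀ i < n, 0 < x i) (hle : ∀ i < n, x i ≤ M)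
    (hsorted : ∀ i j, i ≤ j → j < n → x j ≤ x i)
    (hz0 : ∀ i < n, 0 ≤ z i) (hzx : ∀ i < n, z i ≤ x i) (hsum : D ≤ ∑ i ∈ range n, z i)
    (hrn : r ≤ n) (hrmin : ∀ s < r, ∑ i ∈ range s, x i < D) :
    (r : ℝ) ≤ (1 + √3) * ∑ i ∈ range n, z i / x i := by
  have hsqrt : 1 ≤ √3 := Real.one_le_sqrt.2 (by norm_num)
  have hL0 : 0 ≤ ∑ i ∈ range n, z i / x i := sum_nonneg fun i hi =>
    div_nonneg (hz0 i (mem_range.1 hi)) (hpos i (mem_range.1 hi)).le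
  match r, hrn, hrmin with
  | 0, _, _ => simpa using mul_nonneg (by positivity) hL0
  | 1, _, _ =>
    calc ((1 : ℕ) : ℝ) = (1 + √3) * ((√3 - 1) / 2) := by
          rw [one_add_sqrt_three_mul_sqrt_three_sub_one_div_two, Nat.cast_one]
      _ ≤ (1 + √3) * (D / M) := by gcongr ?_ * ?_; exact (le_div_iff₀ hM).2 hD
      _ ≤ (1 + √3) * ∑ i ∈ range n, z i / M := by rw [← sum_div]; gcongr
      _ ≤ (1 + √3) * ∑ i ∈ range n, z i / x i := by
        gcongr (1 + √3) * ?_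
        refine sum_le_sum fun i hi => ?_
        exact div_le_div_of_nonneg_left (hz0 i (mem_range.1 hi)) (hpos i (mem_range.1 hi))
          (hle i (mem_range.1 hi))
  | k + 2, hrn, hrmin =>
    have hL := natCast_le_sum_div_of_sum_le (k := k + 1) (by omega) hpos hsorted hz0 hzx
      ((hrmin (k + 1) (by omega)).le.trans hsum)
    calc ((k + 2 : ℕ) : ℝ) ≤ 2 * ((k + 1 : ℕ) : ℝ) := by push_cast; linarith
      _ ≤ (1 + √3) * ∑ i ∈ range n, z i / x i :=
        mul_le_mul (by linarith) hL (by positivity) (by positivity)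

end Sorted

theorem rejectBig_cost_bound_general (M f m D : ℝ) (hM : 0 < M) (hf : 0 ≤ f) (hm : 0 ≤ m)
    (hD : ((Real.sqrt 3 - 1) / 2) * M ≤ D)
    (n : ℕ) (x y : ℕ → ℝ)
    (hpos : ∀ i < n, 0 < x i) (hle : ∀ i < n, x i ≤ M)
    (hsorted : ∀ i j, i ≤ j → j < n → x j ≤ x i)
    (hy0 : ∀ i < n, 0 ≤ y i) (hyx : ∀ i < n, y i ≤ x i)
    (hsum : D ≤ ∑ i ∈ Finset.range n, (x i - y i))
    (r : ℕ) (hrn : r ≤ n)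
    (hrmin : ∀ s < r, ∑ i ∈ Finset.range s, x i < D) :
    (1 + Real.sqrt 3) *
        ∑ i ∈ Finset.range n, (f * (x i - y i) + m * ((x i - y i) / x i)) ≥
      ∑ i ∈ Finset.range r, (f * x i + m) := by
  have hz0 : ∀ i < n, 0 ≤ x i - y i := fun i hi => sub_nonneg.2 (hyx i hi)
  have hzx : ∀ i < n, x i - y i ≤ x i := fun i hi => sub_le_self _ (hy0 i hi)
  have hweight := sum_range_le_one_add_sqrt_three_mul hM.le hD
    (fun i hi => (hpos i hi).le) hle hsorted hrn hrmin
  have hcount := natCast_le_one_add_sqrt_three_mul_sum_div hM hD hpos hle hsorted hz0 hzx hsum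
    hrn hrmin
  rw [ge_iff_le, sum_add_distrib, sum_add_distrib, ← mul_sum, ← mul_sum, ← mul_sum, sum_const,
    card_range, nsmul_eq_mul]
  calc f * ∑ i ∈ range r, x i + r * m
      ≤ f * ((1 + √3) * ∑ i ∈ range n, (x i - y i))
        + (1 + √3) * (∑ i ∈ range n, (x i - y i) / x i) * m := by
        gcongr
        exact hweight.trans (by gcongr)
    _ = _ := by ring

/-- Lemma "Appx": the rejection cost of the algorithm on the packets rejected
by RejectBig is at most (1+√3) times the LP cost on all packets of U:
(1+√3)·Σ_{i=1}^n ( f·(x_i − y_i) + m·(x_i − y_i)/x_i ) ≥ Σ_{i=1}^r ( f·x_i + m ). -/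
theorem rejectBig_cost_bound (M f m D : ℝ) (hM : 0 < M) (hf : 0 ≤ f) (hm : 0 ≤ m)
    (hD : ((Real.sqrt 3 - 1) / 2) * M ≤ D)
    (n : ℕ) (x y : ℕ → ℝ)
    (hpos : ∀ i < n, 0 < x i) (hle : ∀ i < n, x i ≤ M)
    (hsorted : ∀ i j, i ≤ j → j < n → x j ≤ x i)
    (hy0 : ∀ i < n, 0 ≤ y i) (hyx : ∀ i < n, y i ≤ x i)
    (hsum : D ≤ ∑ i ∈ Finset.range n, (x i - y i))
    (r : ℕ) (hrn : r ≤ n)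
    (hr : D ≤ ∑ i ∈ Finset.range r, x i)
    (hrmin : ∀ s < r, ∑ i ∈ Finset.range s, x i < D) :
    (1 + Real.sqrt 3) *
        ∑ i ∈ Finset.range n, (f * (x i - y i) + m * ((x i - y i) / x i)) ≥
      ∑ i ∈ Finset.range r, (f * x i + m) :=
  rejectBig_cost_bound_general M f m D hM hf hm hD n x y hpos hle hsorted hy0 hyx hsum r hrn hrmin
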